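/- arXiv:2509.08084 — 3 statements merged into one kernel-verified Lean document; each statement's English description precedes it below -/
import Mathlib

section
/- The mixed volume of the polytopes (C_{n,1},...,C_{n,n}), where C_{n,i} = I_1 + ... + I_{i-1} + 2I_i + I_{i+1} + ... + I_n and I_j = conv(0, e_j) ⊂ ℝ^n, equals the sum over all permutations σ in S_n of 2^{Fix(σ)}, where Fix(σ) is the number of fixed points of σ. -/
open MeasureTheory Pointwise

/-- Mixed volume of `n` convex bodies in `ℝ^n`, normalized so that the mixed volume of the
`n` coordinate unit segments is `1` (polarization formula). -/
noncomputable def mixedVolume {n : ℕ} (K : Fin n → Set (EuclideanSpace ℝ (Fin n))) : ℝ :=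
  ∑ S : Finset (Fin n), (-1 : ℝ) ^ (n - S.card) * (volume (∑ i ∈ S, K i)).toReal

/-- The unit segment `I_j = conv(0, e_j) ⊆ ℝ^n`. -/
noncomputable def unitSegment (n : ℕ) (j : Fin n) : Set (EuclideanSpace ℝ (Fin n)) :=
  segment ℝ 0 (EuclideanSpace.single j 1)

/-- The stretched cube `C_{n,i} = I_1 + ⋯ + 2I_i + ⋯ + I_n`. -/
noncomputable def stretchedCube (n : ℕ) (i : Fin n) : Set (EuclideanSpace ℝ (Fin n)) :=
  ∑ j : Fin n, if j = i then (2 : ℝ) • unitSegment n j else unitSegment n j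

/-!
The Minkowski sum `∑ j, a j • I_j` is the box `∏ j, [0, a j]`, so for bodies
`K_i = ∑ j, a i j • I_j` every partial sum `∑ i ∈ S, K_i` is a box of volume
`∏ j, ∑ i ∈ S, a i j`. The polarization formula defining the mixed volume then becomes Ryser's
inclusion–exclusion formula for the permanent of `(a i j)`. For the stretched cubes `a i j` is
`2` on the diagonal and `1` off it, and a permutation `σ` contributes `2 ^ (fixed points of σ)`
to that permanent.
-/

open Finset

theorem Finset.sum_superset_neg_one_pow_card_compl {ι R : Type*} [Fintype ι] [DecidableEq ι]
    [CommRing R] (T : Finset ι) :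
    ∑ S : Finset ι, (if T ⊆ S then (-1 : R) ^ (Fintype.card ι - #S) else 0) =
      if T = univ then 1 else 0 := by
  -- both sides are expansions of `∏ i, (1 - [i ∉ T])`
  have h := Fintype.prod_add (fun _ => (1 : R)) (fun i => if i ∉ T then -1 else 0)
  have hT : ∀ S : Finset ι, (∀ i ∈ Sᶜ, i ∉ T) ↔ T ⊆ S := fun S => by
    simp only [mem_compl, not_imp_not]; rfl
  simp only [prod_const_one, one_mul, prod_ite_zero, prod_const, card_compl, hT] at h
  rw [← h]
  simp_rw [eq_univ_iff_forall, ← Fintype.prod_boole]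
  congr! 1 with i
  split_ifs <;> simp_all

/-- Ryser's formula. -/
theorem Matrix.permanent_eq_sum_neg_one_pow_mul_prod_sum {ι R : Type*} [Fintype ι]
    [DecidableEq ι] [CommRing R] (M : Matrix ι ι R) :
    M.permanent = ∑ S : Finset ι, (-1) ^ (Fintype.card ι - #S) * ∏ j, ∑ i ∈ S, M i j := by
  have expand (S : Finset ι) : ∏ j, ∑ i ∈ S, M i j =
      ∑ g : ι → ι, if univ.image g ⊆ S then ∏ j, M (g j) j else 0 := by
    simp_rw [← Fintype.sum_ite_mem S, Fintype.prod_sum, prod_ite_zero, image_subset_iff,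
      mem_univ]
  have perm_eq :
      M.permanent = ∑ g : ι → ι, if univ.image g = univ then ∏ j, M (g j) j else 0 := by
    have (g : ι → ι) : univ.image g = univ ↔ g.Bijective := by
      rw [← Finite.surjective_iff_bijective]
      simp [eq_univ_iff_forall, Function.Surjective]
    simp_rw [this, ← sum_filter]
    rw [sum_subtype _ (p := Function.Bijective) (by simp)]
    exact (Fintype.sum_equiv (Equiv.bijectiveEquiv) _ _ fun _ => rfl).symm
  simp_rw [perm_eq, expand, mul_sum, mul_ite, mul_zero]
  rw [sum_comm]
  simp_rw [← ite_zero_mul, ← sum_mul, sum_superset_neg_one_pow_card_compl, ite_mul, one_mul,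
    zero_mul]

theorem Matrix.permanent_of_ite_eq {ι R : Type*} [Fintype ι] [DecidableEq ι] [CommSemiring R]
    (c : R) :
    (Matrix.of fun i j : ι => if i = j then c else 1).permanent =
      ∑ σ : Equiv.Perm ι, c ^ #{i | σ i = i} := by
  simp [Matrix.permanent, prod_ite, prod_const]

theorem Set.univ_pi_eq_sum_image_single {ι : Type*} [Fintype ι] [DecidableEq ι]
    {M : ι → Type*} [∀ i, AddCommMonoid (M i)] (A : ∀ i, Set (M i)) :
    Set.univ.pi A = ∑ i, Pi.single i '' A i := by
  ext x
  rw [Set.mem_fintype_sum]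
  constructor
  · intro hx
    exact ⟨fun i => Pi.single i (x i), fun i => ⟨x i, hx i trivial, rfl⟩, univ_sum_single x⟩
  · rintro ⟨g, hg, rfl⟩
    choose a ha hga using hg
    obtain rfl : g = fun i => Pi.single i (a i) := funext fun i => (hga i).symm
    rw [univ_sum_single]
    exact fun i _ => ha i

theorem smul_segment_zero {E : Type*} [AddCommGroup E] [Module ℝ E] (c : ℝ) (v : E) :
    c • segment ℝ 0 v = segment ℝ 0 (c • v) := by
  have h := image_segment ℝ (DistribSMul.toLinearMap ℝ E c).toAffineMap 0 v
  simp only [LinearMap.coe_toAffineMap, DistribSMul.toLinearMap_apply, smul_zero] at h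
  exact h

theorem smul_segment_zero_single {ι : Type*} [DecidableEq ι] {c : ℝ} (hc : 0 ≤ c) (j : ι) :
    c • segment ℝ 0 (Pi.single j 1 : ι → ℝ) = Pi.single j '' Set.Icc 0 c := by
  have h := image_segment ℝ (LinearMap.single ℝ (fun _ : ι => ℝ) j).toAffineMap 0 c
  rw [smul_segment_zero, ← Pi.single_smul, smul_eq_mul, mul_one, ← segment_eq_Icc hc]
  simpa using h.symm

theorem volume_sum_smul_unitSegment {n : ℕ} {c : Fin n → ℝ} (hc : 0 ≤ c) :
    volume (∑ j, c j • unitSegment n j) = ∏ j, ENNReal.ofReal (c j) := by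
  let e := WithLp.linearEquiv 2 ℝ (Fin n → ℝ)
  have he (j : Fin n) : unitSegment n j = e.symm '' segment ℝ 0 (Pi.single j 1) := by
    have h := image_segment ℝ e.symm.toLinearMap.toAffineMap 0 (Pi.single j 1)
    simp only [LinearMap.coe_toAffineMap, LinearEquiv.coe_coe, map_zero] at h
    exact h.symm
  simp_rw [he, ← image_smul_set, ← Set.image_finsetSum, smul_segment_zero_single (hc _),
    ← Set.univ_pi_eq_sum_image_single, e.image_symm_eq_preimage]
  rw [show ⇑e = WithLp.ofLp from WithLp.coe_linearEquiv ..,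
    (PiLp.volume_preserving_ofLp _).measure_preimage
      (MeasurableSet.univ_pi fun _ => measurableSet_Icc).nullMeasurableSet]
  simp only [volume_pi_pi, Real.volume_Icc, sub_zero]

theorem Convex.finsetSum_smul {E ι : Type*} [AddCommGroup E] [Module ℝ E] {K : Set E}
    (hK : Convex ℝ K) (hne : K.Nonempty) (s : Finset ι) {a : ι → ℝ} (ha : 0 ≤ a) :
    ∑ i ∈ s, a i • K = (∑ i ∈ s, a i) • K := by
  classical
  induction s using Finset.induction_on with
  | empty => simp [Set.zero_smul_set hne]
  | insert b s hb ih =>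
    rw [sum_insert hb, sum_insert hb, ih, hK.add_smul (ha b) (sum_nonneg fun i _ => ha i)]

theorem mixedVolume_sum_smul_unitSegment {n : ℕ} (a : Fin n → Fin n → ℝ) (ha : 0 ≤ a) :
    mixedVolume (fun i => ∑ j, a i j • unitSegment n j) = (Matrix.of a).permanent := by
  rw [Matrix.permanent_eq_sum_neg_one_pow_mul_prod_sum, mixedVolume, Fintype.card_fin]
  refine sum_congr rfl fun S _ => ?_
  have hsum : ∑ i ∈ S, ∑ j, a i j • unitSegment n j =
      ∑ j, (∑ i ∈ S, a i j) • unitSegment n j := by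
    rw [sum_comm]
    exact sum_congr rfl fun j _ =>
      (convex_segment _ _).finsetSum_smul ⟨0, left_mem_segment ℝ _ _⟩ S fun i => ha i j
  rw [hsum, volume_sum_smul_unitSegment fun j => sum_nonneg fun i _ => ha i j,
    ENNReal.toReal_prod]
  simp_rw [ENNReal.toReal_ofReal (sum_nonneg fun i _ => ha i _), Matrix.of_apply]

theorem stretchedCube_eq_sum_smul_unitSegment (n : ℕ) :
    stretchedCube n = fun i => ∑ j, (if i = j then (2 : ℝ) else 1) • unitSegment n j := by
  ext1 i
  refine sum_congr rfl fun j _ => ?_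
  by_cases h : i = j
  · simp [h]
  · simp [h, Ne.symm h]

theorem stmt0 (n : ℕ) :
    mixedVolume (stretchedCube n) =
      ∑ σ : Equiv.Perm (Fin n),
        (2 : ℝ) ^ (Finset.univ.filter fun i => σ i = i).card := by
  rw [stretchedCube_eq_sum_smul_unitSegment,
    mixedVolume_sum_smul_unitSegment _ fun i j => by positivity, Matrix.permanent_of_ite_eq]
end

section
/- For every n ≥ 1, the sum over all permutations σ ∈ S_n of 2^{Fix(σ)} equals ∑_{k=0}^{n} n!/k!, where Fix(σ) is the number of fixed points of σ. -/
open Finset Equiv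

lemma card_fixing (n : ℕ) (T : Finset (Fin n)) :
    Fintype.card {σ : Equiv.Perm (Fin n) // ∀ i ∈ T, σ i = i}
      = (n - T.card).factorial := by
  have e : Equiv.Perm {i : Fin n // i ∉ T} ≃ {σ : Equiv.Perm (Fin n) // ∀ i ∈ T, σ i = i} := by
    refine (Equiv.Perm.subtypeEquivSubtypePerm (fun i => i ∉ T)).trans (Equiv.subtypeEquiv
      (Equiv.refl _) fun f => ?_)
    simp [not_not]
  rw [← Fintype.card_congr e, Fintype.card_perm]
  congr 1
  have : Fintype.card {i : Fin n // i ∉ T} = Fintype.card (Fin n) - T.card := by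
    have := Fintype.card_subtype_compl (fun i : Fin n => i ∈ T)
    simpa [Fintype.card_subtype] using this
  simpa using this

theorem stmt2 (n : ℕ) (hn : 1 ≤ n) :
    ∑ σ : Equiv.Perm (Fin n), 2 ^ (Finset.univ.filter fun i => σ i = i).card
      = ∑ k ∈ Finset.range (n + 1), n.factorial / k.factorial := by
  have step1 : ∀ σ : Equiv.Perm (Fin n),
      2 ^ (Finset.univ.filter fun i => σ i = i).card
        = ∑ T ∈ (Finset.univ : Finset (Fin n)).powerset,
            if (∀ i ∈ T, σ i = i) then 1 else 0 := by
    intro σ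
    rw [← Finset.sum_filter, Finset.sum_const, smul_eq_mul, mul_one,
      ← Finset.card_powerset]
    congr 1
    ext T
    simp [Finset.subset_iff]
  calc ∑ σ : Equiv.Perm (Fin n), 2 ^ (Finset.univ.filter fun i => σ i = i).card
      = ∑ σ : Equiv.Perm (Fin n), ∑ T ∈ (Finset.univ : Finset (Fin n)).powerset,
          if (∀ i ∈ T, σ i = i) then 1 else 0 := by exact Finset.sum_congr rfl fun σ _ => step1 σ
    _ = ∑ T ∈ (Finset.univ : Finset (Fin n)).powerset, ∑ σ : Equiv.Perm (Fin n),
          if (∀ i ∈ T, σ i = i) then 1 else 0 := Finset.sum_comm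
    _ = ∑ T ∈ (Finset.univ : Finset (Fin n)).powerset, (n - T.card).factorial := by
        refine Finset.sum_congr rfl fun T _ => ?_
        rw [← Finset.sum_filter, Finset.sum_const, smul_eq_mul, mul_one,
          ← card_fixing n T, Fintype.card_subtype]
    _ = ∑ k ∈ Finset.range (n + 1), ∑ T ∈ Finset.powersetCard k (Finset.univ : Finset (Fin n)),
          (n - T.card).factorial := by
        rw [Finset.sum_powerset]
        simp
    _ = ∑ k ∈ Finset.range (n + 1), n.factorial / k.factorial := by
        refine Finset.sum_congr rfl fun k hk => ?_
        have hkn : k ≤ n := Nat.lt_succ_iff.mp (Finset.mem_range.mp hk)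
        have : ∀ T ∈ Finset.powersetCard k (Finset.univ : Finset (Fin n)),
            (n - T.card).factorial = (n - k).factorial := by
          intro T hT
          rw [(Finset.mem_powersetCard.mp hT).2]
        rw [Finset.sum_congr rfl this, Finset.sum_const, smul_eq_mul,
          Finset.card_powersetCard, Finset.card_univ, Fintype.card_fin]
        have h := Nat.choose_mul_factorial_mul_factorial hkn
        have : n.factorial = (n.choose k * (n - k).factorial) * k.factorial := by
          rw [← h]; ring
        rw [this, Nat.mul_div_cancel _ (Nat.factorial_pos k)]
end

section
/- For all n ≥ 2, the BKK bound ∑_{σ∈S_n} 2^{Fix(σ)} is strictly less than the Bézout bound (n+1)^n. -/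
lemma two_mul_pow_le_aux (m : ℕ) (hm : 1 ≤ m) : 2 * m ^ m ≤ (m + 1) ^ m := by
  have hm' : (0 : ℝ) < m := by exact_mod_cast hm
  have h1 : (1 + (m : ℝ) * (1 / m)) ≤ (1 + 1 / m) ^ m :=
    one_add_mul_le_pow (by have := one_div_nonneg.mpr hm'.le; linarith) m
  have h2 : (1 + (m : ℝ) * (1 / m)) = 2 := by field_simp; norm_num
  have h3 : ((1 : ℝ) + 1 / m) = (m + 1) / m := by field_simp
  rw [h2, h3, div_pow] at h1
  have h4 : (2 : ℝ) * m ^ m ≤ (m + 1) ^ m := by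
    rw [le_div_iff₀ (by positivity)] at h1
    linarith
  exact_mod_cast h4

open Nat in
lemma fact_mul_two_pow_le (n : ℕ) (hn : 2 ≤ n) : n ! * 2 ^ n ≤ (n + 1) ^ n := by
  induction n with
  | zero => omega
  | succ k ih =>
    rcases Nat.lt_or_ge k 2 with h | h
    · interval_cases k
      · omega
      · decide
    · have ihk := ih h
      have step : 2 * (k + 1) ^ (k + 1) ≤ (k + 2) ^ (k + 1) :=
        two_mul_pow_le_aux (k + 1) (by omega)
      calc (k + 1)! * 2 ^ (k + 1) = 2 * ((k + 1) * (k ! * 2 ^ k)) := by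
            rw [Nat.factorial_succ]; ring
        _ ≤ 2 * ((k + 1) * (k + 1) ^ k) := by
            have := Nat.mul_le_mul_left (k + 1) ihk
            omega
        _ = 2 * (k + 1) ^ (k + 1) := by ring
        _ ≤ (k + 2) ^ (k + 1) := step
        _ = (k + 1 + 1) ^ (k + 1) := by ring_nf

theorem stmt3 (n : ℕ) (hn : 2 ≤ n) :
    ∑ σ : Equiv.Perm (Fin n), 2 ^ (Finset.univ.filter fun i => σ i = i).card
      < (n + 1) ^ n := by
  have h01 : (⟨0, by omega⟩ : Fin n) ≠ ⟨1, by omega⟩ := by simp [Fin.ext_iff]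
  set σ0 : Equiv.Perm (Fin n) := Equiv.swap ⟨0, by omega⟩ ⟨1, by omega⟩ with hσ0
  have hsum : ∑ σ : Equiv.Perm (Fin n), 2 ^ (Finset.univ.filter fun i => σ i = i).card
      < ∑ _σ : Equiv.Perm (Fin n), 2 ^ n := by
    apply Finset.sum_lt_sum
    · intro σ _
      apply Nat.pow_le_pow_right (by norm_num)
      calc (Finset.univ.filter fun i => σ i = i).card ≤ (Finset.univ : Finset (Fin n)).card :=
            Finset.card_filter_le _ _
        _ = n := by simp
    · refine ⟨σ0, Finset.mem_univ _, ?_⟩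
      apply Nat.pow_lt_pow_right (by norm_num)
      have hss : (Finset.univ.filter fun i => σ0 i = i) ⊂ Finset.univ := by
        rw [Finset.ssubset_univ_iff]
        intro h
        have hmem : (⟨0, by omega⟩ : Fin n) ∈ Finset.univ.filter fun i => σ0 i = i := by
          rw [h]; exact Finset.mem_univ _
        rw [Finset.mem_filter] at hmem
        have : σ0 ⟨0, by omega⟩ = ⟨1, by omega⟩ := Equiv.swap_apply_left _ _
        rw [this] at hmem
        exact h01.symm hmem.2
      calc (Finset.univ.filter fun i => σ0 i = i).card
          < (Finset.univ : Finset (Fin n)).card := Finset.card_lt_card hss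
        _ = n := by simp
  rw [Finset.sum_const, Finset.card_univ, Fintype.card_perm, Fintype.card_fin,
    smul_eq_mul] at hsum
  exact lt_of_lt_of_le hsum (fact_mul_two_pow_le n hn)
end
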